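/- Let τ be a symmetric g×g complex matrix whose real part is negative definite. Then the Riemann theta function θ_τ(z) = Σ_{m ∈ ℤ^g} exp(4 Q_τ(m) + 2 m·z) is an entire function of z, i.e. it is complex analytic on all of ℂ^g. -/

import Mathlib

open scoped BigOperators

/-- `Q_τ(m) = (1/4) Σ_{i,j} τ_{ij} m_i m_j`. -/
noncomputable def thetaQ {g : ℕ} (τ : Matrix (Fin g) (Fin g) ℂ) (m : Fin g → ℂ) : ℂ :=
  (1/4) * ∑ i, ∑ j, τ i j * m i * m j

/-- The real part of `τ` is negative definite. -/
def ReNegDef {g : ℕ} (τ : Matrix (Fin g) (Fin g) ℂ) : Prop :=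
  ∀ x : Fin g → ℝ, x ≠ 0 → ∑ i, ∑ j, (τ i j).re * x i * x j < 0

/-- The Riemann theta function `θ_τ(z) = Σ_{m ∈ ℤ^g} exp(4 Q_τ(m) + 2 m·z)`. -/
noncomputable def riemannTheta {g : ℕ} (τ : Matrix (Fin g) (Fin g) ℂ)
    (z : Fin g → ℂ) : ℂ :=
  ∑' m : Fin g → ℤ,
    Complex.exp (4 * thetaQ τ (fun i => (m i : ℂ)) + 2 * ∑ i, (m i : ℂ) * z i)

/-!
Each term of the theta series is `a_m · exp(ℓ_m z)` with `a_m = exp(4 Q_τ(m))` and `ℓ_m` the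
linear form `z ↦ 2 m·z`. Expanding every exponential in its power series at `z₀`, the resulting
double series over `ℤ^g × ℕ` converges absolutely because `|a_m| ≤ exp(-c‖m‖²)` (negative
definiteness of `Re τ` plus compactness of the unit sphere) while `‖ℓ_m‖ = O(‖m‖)`, so the
Gaussian decay beats `exp(R‖ℓ_m‖)` for every `R`. Regrouping by degree gives a power series for
`θ_τ` at `z₀`.
-/

open scoped NNReal ENNReal Nat
open NormedSpace

theorem HasFPowerSeriesOnBall.tsum {𝕜 ι E F : Type*} [NontriviallyNormedField 𝕜]
    [NormedAddCommGroup E] [NormedSpace 𝕜 E] [NormedAddCommGroup F] [NormedSpace 𝕜 F]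
    [CompleteSpace F] {f : ι → E → F} {p : ι → FormalMultilinearSeries 𝕜 E F} {x : E}
    {r : ℝ≥0} (hr : 0 < r) (hf : ∀ i, HasFPowerSeriesOnBall (f i) (p i) x r)
    (hp : Summable fun q : ι × ℕ => ‖p q.1 q.2‖ * r ^ q.2) :
    HasFPowerSeriesOnBall (fun y => ∑' i, f i y) (fun n => ∑' i, p i n) x r := by
  have hpn : ∀ n, Summable fun i => ‖p i n‖ := fun n => by
    simpa [hr.ne'] using (hp.comp_injective (Prod.mk_left_injective n)).div_const (r ^ n : ℝ)
  refine ⟨?_, by simpa using hr, fun {y} hy => ?_⟩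
  · refine FormalMultilinearSeries.le_radius_of_bound _
      (∑' q : ι × ℕ, ‖p q.1 q.2‖ * r ^ q.2) fun n => ?_
    calc ‖∑' i, p i n‖ * r ^ n ≤ (∑' i, ‖p i n‖) * r ^ n := by
          gcongr; exact norm_tsum_le_tsum_norm (hpn n)
      _ = ∑' i, ‖p (i, n).1 (i, n).2‖ * r ^ (i, n).2 := tsum_mul_right.symm
      _ ≤ ∑' q : ι × ℕ, ‖p q.1 q.2‖ * r ^ q.2 :=
          Summable.tsum_le_tsum_of_inj _ (Prod.mk_left_injective n) (fun _ _ => by positivity)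
            (fun _ => le_rfl) (hp.comp_injective (Prod.mk_left_injective n)) hp
  · have hyr : ‖y‖ ≤ r := by
      have := (Metric.mem_eball.1 hy).le
      rw [edist_zero_right, enorm_eq_nnnorm, ENNReal.coe_le_coe] at this
      exact_mod_cast this
    set G : ι × ℕ → F := fun q => p q.1 q.2 fun _ => y
    have hG : Summable G := by
      refine Summable.of_norm_bounded hp fun q => ?_
      calc ‖G q‖ ≤ ‖p q.1 q.2‖ * ∏ _ : Fin q.2, ‖y‖ := (p q.1 q.2).le_opNorm _
        _ ≤ ‖p q.1 q.2‖ * r ^ q.2 := by simp only [Finset.prod_const, Finset.card_fin]; gcongr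
    have heval : ∀ n, (∑' i, p i n) (fun _ => y) = ∑' i, G (i, n) := fun n =>
      ContinuousMultilinearMap.tsum_eval (hpn n).of_norm _
    have hrow : ∀ i, ∑' n, G (i, n) = f i (x + y) := fun i => ((hf i).hasSum hy).tsum_eq
    simp only [heval]
    rw [← funext hrow, ← Summable.tsum_comm (f := fun i n => G (i, n)) hG]
    exact hG.prod_symm.prod.hasSum

theorem norm_expSeries_compContinuousLinearMap_le {𝕂 E : Type*} [RCLike 𝕂]
    [NormedAddCommGroup E] [NormedSpace 𝕂 E] (ℓ : E →L[𝕂] 𝕂) (n : ℕ) :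
    ‖(expSeries 𝕂 𝕂).compContinuousLinearMap ℓ n‖ ≤ ‖ℓ‖ ^ n / n ! := by
  calc ‖(expSeries 𝕂 𝕂).compContinuousLinearMap ℓ n‖
      ≤ ‖expSeries 𝕂 𝕂 n‖ * ∏ _ : Fin n, ‖ℓ‖ :=
        ContinuousMultilinearMap.norm_compContinuousLinearMap_le _ _
    _ = ‖ℓ‖ ^ n / n ! := by
        simp [expSeries, norm_smul, ContinuousMultilinearMap.norm_mkPiAlgebraFin, div_eq_inv_mul]

theorem hasFPowerSeriesOnBall_cexp_comp {E : Type*} [NormedAddCommGroup E] [NormedSpace ℂ E]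
    (ℓ : E →L[ℂ] ℂ) (z₀ : E) :
    HasFPowerSeriesOnBall (fun z => Complex.exp (ℓ z))
      (Complex.exp (ℓ z₀) • (expSeries ℂ ℂ).compContinuousLinearMap ℓ) z₀ ∞ := by
  have h : HasFPowerSeriesOnBall exp (expSeries ℂ ℂ) (ℓ 0) ∞ :=
    (map_zero ℓ).symm ▸ exp_hasFPowerSeriesOnBall
  have h' := (h.compContinuousLinearMap.const_smul (c := Complex.exp (ℓ z₀))).comp_sub z₀
  rw [ENNReal.top_div_of_ne_top enorm_ne_top, zero_add] at h'
  refine h'.congr fun z _ => ?_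
  simp [← Complex.exp_eq_exp_ℂ, ← Complex.exp_add]

theorem Real.hasSum_pow_div_factorial (x : ℝ) :
    HasSum (fun n => x ^ n / n !) (Real.exp x) := by
  rw [Real.exp_eq_exp_ℝ]; exact expSeries_div_hasSum_exp x

theorem summable_mul_pow_div_factorial {ι : Type*} {C x : ι → ℝ} (hC : ∀ i, 0 ≤ C i)
    (hx : ∀ i, 0 ≤ x i) (h : Summable fun i => C i * Real.exp (x i)) :
    Summable fun q : ι × ℕ => C q.1 * (x q.1 ^ q.2 / q.2 !) := by
  refine (summable_prod_of_nonneg fun q => ?_).2 ⟨fun i => ?_, ?_⟩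
  · have := hC q.1; have := hx q.1; positivity
  · exact (Real.summable_pow_div_factorial (x i)).mul_left (C i)
  · simpa only [tsum_mul_left, (Real.hasSum_pow_div_factorial _).tsum_eq] using h

theorem analyticOnNhd_tsum_mul_cexp {ι E : Type*} [NormedAddCommGroup E] [NormedSpace ℂ E]
    (a : ι → ℂ) (ℓ : ι → E →L[ℂ] ℂ)
    (h : ∀ R : ℝ, Summable fun i => ‖a i‖ * Real.exp (R * ‖ℓ i‖)) :
    AnalyticOnNhd ℂ (fun z => ∑' i, a i * Complex.exp (ℓ i z)) Set.univ := by
  intro z₀ _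
  have hf : ∀ i, HasFPowerSeriesOnBall (fun z => a i * Complex.exp (ℓ i z))
      (a i • Complex.exp (ℓ i z₀) • (expSeries ℂ ℂ).compContinuousLinearMap (ℓ i)) z₀ (1 : ℝ≥0) :=
    fun i => ((hasFPowerSeriesOnBall_cexp_comp (ℓ i) z₀).const_smul (c := a i)).mono
      (r' := (1 : ℝ≥0)) (by norm_num) le_top
  refine (HasFPowerSeriesOnBall.tsum one_pos hf ?_).analyticAt
  set C : ι → ℝ := fun i => ‖a i‖ * Real.exp (‖ℓ i‖ * ‖z₀‖)
  have hC : ∀ i, 0 ≤ C i := fun i => by positivity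
  have hbound : ∀ q : ι × ℕ, ‖(a q.1 • Complex.exp (ℓ q.1 z₀) •
      (expSeries ℂ ℂ).compContinuousLinearMap (ℓ q.1)) q.2‖ * (1 : ℝ≥0) ^ q.2
        ≤ C q.1 * (‖ℓ q.1‖ ^ q.2 / q.2 !) := by
    rintro ⟨i, n⟩
    have hexp : ‖Complex.exp (ℓ i z₀)‖ ≤ Real.exp (‖ℓ i‖ * ‖z₀‖) := by
      rw [Complex.norm_exp]
      exact Real.exp_le_exp.2 ((Complex.re_le_norm _).trans ((ℓ i).le_opNorm z₀))
    simp only [FormalMultilinearSeries.smul_apply, norm_smul, NNReal.coe_one, one_pow, mul_one]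
    rw [← mul_assoc]
    exact mul_le_mul (mul_le_mul_of_nonneg_left hexp (norm_nonneg _))
      (norm_expSeries_compContinuousLinearMap_le (ℓ i) n) (norm_nonneg _) (hC i)
  refine Summable.of_nonneg_of_le (fun _ => by positivity) hbound ?_
  refine summable_mul_pow_div_factorial (x := fun i => ‖ℓ i‖) hC (fun i => norm_nonneg _) ?_
  simpa only [C, mul_assoc, ← Real.exp_add, add_mul, one_mul, mul_comm ‖z₀‖]
    using h (‖z₀‖ + 1)

theorem exists_pos_le_neg_mul_norm_sq {V : Type*} [NormedAddCommGroup V] [NormedSpace ℝ V]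
    [FiniteDimensional ℝ V] {q : V → ℝ} (hq : Continuous q)
    (hsmul : ∀ (t : ℝ) (x : V), q (t • x) = t ^ 2 * q x) (hneg : ∀ x ≠ 0, q x < 0) :
    ∃ c > 0, ∀ x, q x ≤ -c * ‖x‖ ^ 2 := by
  have hq0 : q 0 = 0 := by simpa using hsmul 0 0
  rcases subsingleton_or_nontrivial V with hV | hV
  · exact ⟨1, one_pos, fun x => by simp [Subsingleton.elim x 0, hq0]⟩
  obtain ⟨x₀, hx₀, hmax⟩ := (isCompact_sphere (0 : V) 1).exists_isMaxOn
    (NormedSpace.sphere_nonempty.2 zero_le_one) hq.continuousOn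
  have hx₀0 : x₀ ≠ 0 := ne_zero_of_mem_unit_sphere ⟨x₀, hx₀⟩
  refine ⟨-q x₀, neg_pos.2 (hneg x₀ hx₀0), fun x => ?_⟩
  rcases eq_or_ne x 0 with rfl | hx
  · simp [hq0]
  have hxpos : 0 < ‖x‖ := norm_pos_iff.2 hx
  have hle : ‖x‖⁻¹ ^ 2 * q x ≤ q x₀ := by
    rw [← hsmul]
    exact hmax (by simp [norm_smul, hxpos.ne'])
  calc q x = ‖x‖ ^ 2 * (‖x‖⁻¹ ^ 2 * q x) := by field_simp
    _ ≤ ‖x‖ ^ 2 * q x₀ := by gcongr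
    _ = -(-q x₀) * ‖x‖ ^ 2 := by ring

theorem summable_exp_neg_abs_int : Summable fun n : ℤ => Real.exp (-|(n : ℝ)|) :=
  .of_nat_of_neg (by simpa using Real.summable_exp_neg_nat)
    (by simpa using Real.summable_exp_neg_nat)

theorem summable_prod_apply_of_nonneg {α : Type*} {f : α → ℝ} (hf₀ : ∀ a, 0 ≤ f a)
    (hf : Summable f) (g : ℕ) : Summable fun m : Fin g → α => ∏ i, f (m i) := by
  induction g with
  | zero => exact Summable.of_finite
  | succ g ih =>
    have hprod := Summable.mul_of_nonneg hf ih hf₀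
      (fun m => Finset.prod_nonneg fun i _ => hf₀ (m i))
    refine ((Equiv.summable_iff (Fin.consEquiv fun _ => α).symm).mpr hprod).congr fun m => ?_
    simp [Fin.consEquiv, Fin.prod_univ_succ, Fin.tail]

theorem neg_mul_sq_add_mul_le {c : ℝ} (hc : 0 < c) (A t : ℝ) :
    -c * t ^ 2 + A * t ≤ A ^ 2 / (4 * c) := by
  rw [le_div_iff₀ (by positivity)]
  nlinarith [sq_nonneg (2 * c * t - A)]

theorem summable_exp_neg_mul_sq_norm_add (g : ℕ) {c : ℝ} (hc : 0 < c) (B : ℝ) :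
    Summable fun m : Fin g → ℤ =>
      Real.exp (-c * ‖fun i => (m i : ℝ)‖ ^ 2 + B * ‖fun i => (m i : ℝ)‖) := by
  -- after completing the square, the Gaussian factor is dominated by `∏ i, exp (-|m i|)`
  have hprod := (summable_prod_apply_of_nonneg (fun _ => (Real.exp_pos _).le)
    summable_exp_neg_abs_int g).mul_left (Real.exp ((B + g) ^ 2 / (4 * c)))
  refine hprod.of_nonneg_of_le (fun _ => (Real.exp_pos _).le) fun m => ?_
  set t := ‖fun i => (m i : ℝ)‖
  have hsum : ∑ i, |(m i : ℝ)| ≤ g * t := by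
    simpa using Finset.sum_le_card_nsmul Finset.univ _ t
      fun i _ => norm_le_pi_norm (fun i => (m i : ℝ)) i
  rw [← Real.exp_sum, ← Real.exp_add, Real.exp_le_exp, Finset.sum_neg_distrib]
  linarith [neg_mul_sq_add_mul_le hc (B + g) t]

noncomputable def dotProductCLM {g : ℕ} (v : Fin g → ℂ) : (Fin g → ℂ) →L[ℂ] ℂ :=
  ∑ i, v i • ContinuousLinearMap.proj i

theorem dotProductCLM_apply {g : ℕ} (v z : Fin g → ℂ) :
    dotProductCLM v z = ∑ i, v i * z i := by
  simp [dotProductCLM]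

theorem norm_dotProductCLM_le {g : ℕ} (v : Fin g → ℂ) : ‖dotProductCLM v‖ ≤ ∑ i, ‖v i‖ := by
  refine ContinuousLinearMap.opNorm_le_bound _ (by positivity) fun z => ?_
  rw [dotProductCLM_apply, Finset.sum_mul]
  refine (norm_sum_le _ _).trans (Finset.sum_le_sum fun i _ => ?_)
  rw [norm_mul]
  gcongr
  exact norm_le_pi_norm z i

theorem sum_sum_re_mul_smul {g : ℕ} (τ : Matrix (Fin g) (Fin g) ℂ) (t : ℝ) (x : Fin g → ℝ) :
    ∑ i, ∑ j, (τ i j).re * (t • x) i * (t • x) j = t ^ 2 * ∑ i, ∑ j, (τ i j).re * x i * x j := by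
  simp only [Pi.smul_apply, smul_eq_mul, Finset.mul_sum]
  exact Finset.sum_congr rfl fun i _ => Finset.sum_congr rfl fun j _ => by ring

theorem norm_cexp_four_mul_thetaQ_intCast {g : ℕ} (τ : Matrix (Fin g) (Fin g) ℂ)
    (m : Fin g → ℤ) : ‖Complex.exp (4 * thetaQ τ fun i => (m i : ℂ))‖
      = Real.exp (∑ i, ∑ j, (τ i j).re * (m i : ℝ) * (m j : ℝ)) := by
  simp [Complex.norm_exp, thetaQ, Complex.re_sum, Complex.mul_re]

theorem norm_dotProductCLM_two_mul_intCast_le {g : ℕ} (m : Fin g → ℤ) :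
    ‖dotProductCLM fun i => 2 * (m i : ℂ)‖ ≤ 2 * g * ‖fun i => (m i : ℝ)‖ := by
  refine (norm_dotProductCLM_le _).trans ?_
  calc ∑ i, ‖2 * (m i : ℂ)‖ ≤ ∑ _i : Fin g, 2 * ‖fun i => (m i : ℝ)‖ :=
        Finset.sum_le_sum fun i _ => by simpa using norm_le_pi_norm (fun i => (m i : ℝ)) i
    _ = 2 * g * ‖fun i => (m i : ℝ)‖ := by simp only [Finset.sum_const, Finset.card_univ,
          Fintype.card_fin, nsmul_eq_mul]; ring

theorem riemannTheta_eq_tsum_mul_cexp {g : ℕ} (τ : Matrix (Fin g) (Fin g) ℂ) :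
    riemannTheta τ = fun z => ∑' m : Fin g → ℤ, Complex.exp (4 * thetaQ τ fun i => (m i : ℂ)) *
      Complex.exp (dotProductCLM (fun i => 2 * (m i : ℂ)) z) := by
  refine funext fun z => tsum_congr fun m => ?_
  rw [← Complex.exp_add, dotProductCLM_apply, Finset.mul_sum]
  simp only [mul_assoc]

theorem stmt3_general {g : ℕ} (τ : Matrix (Fin g) (Fin g) ℂ)
    (hneg : ReNegDef τ) :
    AnalyticOnNhd ℂ (riemannTheta τ) Set.univ := by
  obtain ⟨c, hc, hquad⟩ := exists_pos_le_neg_mul_norm_sq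
    (q := fun x : Fin g → ℝ => ∑ i, ∑ j, (τ i j).re * x i * x j) (by fun_prop)
    (sum_sum_re_mul_smul τ) hneg
  rw [riemannTheta_eq_tsum_mul_cexp]
  refine analyticOnNhd_tsum_mul_cexp _ _ fun R => ?_
  refine (summable_exp_neg_mul_sq_norm_add g hc (|R| * (2 * g))).of_nonneg_of_le
    (fun _ => by positivity) fun m => ?_
  rw [norm_cexp_four_mul_thetaQ_intCast, ← Real.exp_add, Real.exp_le_exp, mul_assoc |R|]
  gcongr ?_ + ?_
  · exact hquad _
  · calc R * _ ≤ |R| * _ := mul_le_mul_of_nonneg_right (le_abs_self R) (norm_nonneg _)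
      _ ≤ _ := by gcongr; exact norm_dotProductCLM_two_mul_intCast_le m

theorem stmt3 {g : ℕ} (τ : Matrix (Fin g) (Fin g) ℂ) (hsym : τ.IsSymm)
    (hneg : ReNegDef τ) :
    AnalyticOnNhd ℂ (riemannTheta τ) Set.univ :=
  stmt3_general τ hneg
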